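/- arXiv:2003.12269 — 3 statements merged into one kernel-verified Lean document; each statement's English description precedes it below -/
import Mathlib

section
/- Let B be a commutative ring, p a prime, and I ⊆ B an ideal with Iᵐ = 0. Then the ideal W_n(I) = {(x₀,…,x_{n-1}) ∈ W_n(B) : xᵢ ∈ I for all i} of the length-n p-typical Witt vectors W_n(B) is nilpotent. -/
/-!
The Witt multiplication polynomial `φ = wittMul p k` vanishes as soon as one of its two arguments
is `0`, so `(x * y)_k = φ(a + b) - φ(a) - φ(b) + φ(0)` with `a = (x, 0)` and `b = (0, y)`. Such a
second difference of a polynomial lies in `I₁ * I₂` whenever `a` has entries in `I₁` and `b` in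
`I₂`. Hence `W(I₁) * W(I₂) ⊆ W(I₁ * I₂)`, and `W_n(I) ^ m ⊆ W_n(I ^ m) = 0`.
-/

namespace MvPolynomial

variable {σ R B : Type*} [CommSemiring R] [CommRing B] [Algebra R B]

theorem aeval_sub_aeval_mem (φ : MvPolynomial σ R) {J : Ideal B} {u w : σ → B}
    (h : ∀ s, u s - w s ∈ J) : aeval u φ - aeval w φ ∈ J := by
  rw [← Ideal.Quotient.eq, ← Ideal.Quotient.mkₐ_eq_mk R, ← AlgHom.comp_apply,
    ← AlgHom.comp_apply, comp_aeval, comp_aeval]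
  congr 2
  funext s
  exact Ideal.Quotient.eq.2 (h s)

theorem aeval_add_sub_aeval_sub_aeval_add_aeval_zero_mem_mul (φ : MvPolynomial σ R)
    {I₁ I₂ : Ideal B} {a b : σ → B} (ha : ∀ s, a s ∈ I₁) (hb : ∀ s, b s ∈ I₂) :
    aeval (a + b) φ - aeval a φ - aeval b φ + aeval 0 φ ∈ I₁ * I₂ := by
  induction φ using MvPolynomial.induction_on with
  | C r => simp
  | add φ ψ hφ hψ =>
    simp only [map_add]
    convert add_mem hφ hψ using 1
    ring
  | mul_X φ s hφ =>
    have hA : aeval (a + b) φ - aeval a φ ∈ I₂ :=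
      aeval_sub_aeval_mem φ fun t => by simpa using hb t
    have hB : aeval (a + b) φ - aeval b φ ∈ I₁ :=
      aeval_sub_aeval_mem φ fun t => by simpa using ha t
    -- the second difference of `φ * X s` is
    -- `a s * (φ(a + b) - φ(a)) + b s * (φ(a + b) - φ(b))`
    simp only [map_mul, aeval_X, Pi.add_apply, Pi.zero_apply, mul_zero, add_zero]
    convert add_mem (Ideal.mul_mem_mul (ha s) hA)
      (mul_comm I₂ I₁ ▸ Ideal.mul_mem_mul (hb s) hB) using 1
    ring

end MvPolynomial

namespace WittVector

variable {p : ℕ} [Fact p.Prime] {B : Type*} [CommRing B]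

theorem coeff_mul_mem_mul {I₁ I₂ : Ideal B} {x y : WittVector p B} (hx : ∀ i, x.coeff i ∈ I₁)
    (hy : ∀ i, y.coeff i ∈ I₂) (k : ℕ) : (x * y).coeff k ∈ I₁ * I₂ := by
  have hmul (u v : WittVector p B) :
      MvPolynomial.aeval (Function.uncurry ![u.coeff, v.coeff]) (wittMul p k) = (u * v).coeff k :=
    (mul_coeff u v k).symm
  have hsplit : Function.uncurry ![x.coeff, y.coeff] =
      Function.uncurry ![x.coeff, (0 : WittVector p B).coeff] +
        Function.uncurry ![(0 : WittVector p B).coeff, y.coeff] := by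
    funext ⟨i, j⟩; fin_cases i <;> simp
  have hzero : (0 : Fin 2 × ℕ → B) =
      Function.uncurry ![(0 : WittVector p B).coeff, (0 : WittVector p B).coeff] := by
    funext ⟨i, j⟩; fin_cases i <;> simp
  have hdiff := MvPolynomial.aeval_add_sub_aeval_sub_aeval_add_aeval_zero_mem_mul (wittMul p k)
    (I₁ := I₁) (I₂ := I₂) (a := Function.uncurry ![x.coeff, (0 : WittVector p B).coeff])
    (b := Function.uncurry ![(0 : WittVector p B).coeff, y.coeff])
    (fun ⟨i, j⟩ => by fin_cases i <;> simp [hx]) (fun ⟨i, j⟩ => by fin_cases i <;> simp [hy])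
  rw [← hsplit, hzero] at hdiff
  simpa only [hmul, mul_zero, zero_mul, zero_coeff, sub_zero, add_zero] using hdiff

variable (p) in
noncomputable def ideal (J : Ideal B) : Ideal (WittVector p B) :=
  RingHom.ker (map (Ideal.Quotient.mk J))

theorem mem_ideal_iff {J : Ideal B} {x : WittVector p B} :
    x ∈ ideal p J ↔ ∀ i, x.coeff i ∈ J := by
  simp [ideal, map_eq_zero_iff, Ideal.Quotient.eq_zero_iff_mem]

theorem ideal_mul_le (I₁ I₂ : Ideal B) : ideal p I₁ * ideal p I₂ ≤ ideal p (I₁ * I₂) :=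
  Ideal.mul_le.2 fun _ hx _ hy => mem_ideal_iff.2 <|
    coeff_mul_mem_mul (mem_ideal_iff.1 hx) (mem_ideal_iff.1 hy)

theorem ideal_pow_le (J : Ideal B) (k : ℕ) : ideal p J ^ k ≤ ideal p (J ^ k) := by
  induction k with
  | zero => exact fun x _ => mem_ideal_iff.2 fun _ => by simp
  | succ k ih => rw [pow_succ, pow_succ]; exact (Ideal.mul_mono_left ih).trans (ideal_mul_le _ _)

theorem ideal_bot : ideal p (⊥ : Ideal B) = ⊥ := by
  ext x
  simp [mem_ideal_iff, WittVector.ext_iff]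

end WittVector

namespace TruncatedWittVector

variable (p : ℕ) [Fact p.Prime] (n : ℕ) {B : Type*} [CommRing B]

noncomputable def ideal (J : Ideal B) : Ideal (TruncatedWittVector p n B) :=
  (WittVector.ideal p J).map (WittVector.truncate n)

variable {p n}

theorem mem_ideal_iff {J : Ideal B} {x : TruncatedWittVector p n B} :
    x ∈ ideal p n J ↔ ∀ i, x.coeff i ∈ J := by
  rw [ideal, Ideal.mem_map_iff_of_surjective _ (WittVector.truncate_surjective p n B)]
  constructor
  · rintro ⟨w, hw, rfl⟩ i
    rw [WittVector.coeff_truncate]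
    exact WittVector.mem_ideal_iff.1 hw i
  · intro hx
    refine ⟨x.out, WittVector.mem_ideal_iff.2 fun j => ?_, truncateFun_out x⟩
    show (if h : j < n then x.coeff ⟨j, h⟩ else 0) ∈ J
    split_ifs
    exacts [hx _, J.zero_mem]

theorem ideal_pow_le (J : Ideal B) (k : ℕ) : ideal p n J ^ k ≤ ideal p n (J ^ k) := by
  rw [ideal, ← Ideal.map_pow]
  exact Ideal.map_mono (WittVector.ideal_pow_le J k)

theorem ideal_bot : ideal p n (⊥ : Ideal B) = ⊥ := by
  rw [ideal, WittVector.ideal_bot, Ideal.map_bot]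

end TruncatedWittVector

/-- Let `I ⊆ B` be an ideal with `Iᵐ = 0`.  Then the ideal
`W_n(I) = {x ∈ W_n(B) : xᵢ ∈ I for all i}` of the length-`n` `p`-typical Witt
vectors — i.e. the kernel of the natural (componentwise) ring homomorphism
`W_n(B) → W_n(B/I)` — is nilpotent. -/
theorem truncatedWittVector_ideal_nilpotent (p : ℕ) [Fact p.Prime] (n : ℕ)
    {B : Type*} [CommRing B] (I : Ideal B) (m : ℕ) (hm : I ^ m = ⊥)
    (g : TruncatedWittVector p n B →+* TruncatedWittVector p n (B ⧸ I))
    (hg : ∀ (x : TruncatedWittVector p n B) (i : Fin n),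
      (g x).coeff i = Ideal.Quotient.mk I (x.coeff i)) :
    (∀ x : TruncatedWittVector p n B, g x = 0 ↔ ∀ i, x.coeff i ∈ I) ∧
    IsNilpotent (RingHom.ker g) := by
  have hker (x : TruncatedWittVector p n B) : g x = 0 ↔ ∀ i, x.coeff i ∈ I := by
    simp only [← Ideal.Quotient.eq_zero_iff_mem, ← hg]
    exact ⟨fun h i => by rw [h, TruncatedWittVector.coeff_zero],
      fun h => TruncatedWittVector.ext fun i => by rw [h, TruncatedWittVector.coeff_zero]⟩
  have hker_eq : RingHom.ker g = TruncatedWittVector.ideal p n I := by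
    ext x
    rw [RingHom.mem_ker, hker, TruncatedWittVector.mem_ideal_iff]
  refine ⟨hker, m, eq_bot_iff.2 ?_⟩
  calc RingHom.ker g ^ m ≤ TruncatedWittVector.ideal p n (I ^ m) := by
        rw [hker_eq]; exact TruncatedWittVector.ideal_pow_le I m
    _ = ⊥ := by rw [hm, TruncatedWittVector.ideal_bot]
end

section
/- There exist polynomials P_n ∈ O[T, T', …, T⁽ⁿ⁾] with P₀ = T, P₁ = T', satisfying the recursion P_n = P_{n-1}^δ + Σ_{i=0}^{n-2} Σ_{j=1}^{q^{n-1-i}} π^{i+j-n}·C(q^{n-1-i}, j)·P_i^{q(q^{n-1-i}-j)}·(P_i^δ)^j (with all coefficients π^{i+j-n}·C(q^{n-1-i},j) in O), such that for any O-algebra with π-derivation (B, δ) and any b ∈ B, the canonical section exp_δ : B → W_{π,q}(B) has Witt components exp_δ(b) = (P₀(b), P₁(b), P₂(b), …), where P_n(b) := P_n(b, δb, …, δⁿb). -/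
/-!
The universal Frobenius lift on `O[T, T', …]` is the `O`-algebra endomorphism
`φ : T⁽ⁱ⁾ ↦ (T⁽ⁱ⁾)^q + π T⁽ⁱ⁺¹⁾`, and `π Q^δ = φ(Q) - Q^q`. Since `φ(Q) ≡ Q^q mod π` and
`π ∣ q`, congruences mod `πᵏ` are raised to congruences mod `πᵏ⁺¹` by `q`-th powers, so
(Dwork's lemma) the division by `πⁿ` in
`πⁿ Pₙ = φⁿ(T) - Σ_{i<n} πⁱ Pᵢ^{q^{n-i}}` is exact: `(φⁿ(T))ₙ` is the ghost vector of a
Witt vector with components `Pₙ`. Expanding `φ(Pᵢ)^{q^k} = (Pᵢ^q + π Pᵢ^δ)^{q^k}` binomially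
gives the recursion, and specialising `T⁽ᵏ⁾ ↦ δᵏ(b)` intertwines `φ` with
`b ↦ b^q + π δ(b)`, so the ghost components of `(Pₙ(b))ₙ` are those of `exp_δ(b)`.
-/

open MvPolynomial Finset

theorem Nat.Prime.pow_add_one_sub_dvd_choose_pow {p t j : ℕ} (hp : p.Prime) (hj : j ≠ 0) :
    p ^ (t + 1 - j) ∣ (p ^ t).choose j := by
  rcases le_or_gt j (p ^ t) with hjt | hjt
  · rw [hp.pow_dvd_iff_le_factorization (Nat.choose_pos hjt).ne',
      Nat.factorization_choose_prime_pow hp hjt hj]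
    have := Nat.factorization_lt p hj
    omega
  · rw [Nat.choose_eq_zero_of_lt hjt]
    exact dvd_zero _

theorem dvd_pow_sub_pow_of_dvd_sub {R : Type*} [CommRing R] {ϖ a b : R} {q : ℕ}
    (hq : ϖ ∣ (q : R)) (h : ϖ ∣ a - b) (k : ℕ) : ϖ ^ (k + 1) ∣ a ^ q ^ k - b ^ q ^ k := by
  induction k with
  | zero => simpa using h
  | succ k ih =>
    rw [pow_succ q k, pow_mul, pow_mul, ← geom_sum₂_mul, pow_succ']
    refine mul_dvd_mul ?_ ih
    let f : R →+* R ⧸ Ideal.span {ϖ} := Ideal.Quotient.mk _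
    have hf : ∀ r : R, ϖ ∣ r ↔ f r = 0 := fun r ↦ by
      rw [Ideal.Quotient.eq_zero_iff_mem, Ideal.mem_span_singleton]
    rw [hf, map_sub, sub_eq_zero] at h
    rw [hf, RingHom.map_geom_sum₂, map_pow, map_pow, h, geom_sum₂_self, mul_eq_zero_of_left]
    rwa [← map_natCast f, ← hf]

theorem add_pow_sub_pow_eq_sum_Icc {R : Type*} [CommRing R] (x y : R) (N : ℕ) :
    (x + y) ^ N - x ^ N = ∑ j ∈ Icc 1 N, (N.choose j : R) * x ^ (N - j) * y ^ j := by
  rw [add_comm x y, add_pow, sum_range_succ', ← Ico_add_one_right_eq_Icc, sum_Ico_eq_sum_range]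
  simp only [pow_zero, Nat.sub_zero, Nat.choose_zero_right, Nat.cast_one, one_mul, mul_one,
    add_sub_cancel_right, Nat.add_sub_cancel]
  exact sum_congr rfl fun j _ ↦ by rw [add_comm 1 j]; ring

section Ghost

variable {R : Type*} [CommRing R] (ϖ : R) (q : ℕ)

def ghostComponent (P : ℕ → R) (n : ℕ) : R :=
  ∑ i ∈ range (n + 1), ϖ ^ i * P i ^ q ^ (n - i)

theorem ghostComponent_succ (P : ℕ → R) (n : ℕ) :
    ghostComponent ϖ q P (n + 1) =
      ghostComponent ϖ q (fun i ↦ P i ^ q) n + ϖ ^ (n + 1) * P (n + 1) := by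
  rw [ghostComponent, sum_range_succ, Nat.sub_self, pow_zero, pow_one, ghostComponent]
  refine congrArg (· + _) (sum_congr rfl fun i hi ↦ ?_)
  rw [← pow_mul, ← pow_succ', Nat.sub_add_comm (Nat.lt_succ_iff.mp (mem_range.mp hi))]

theorem map_ghostComponent {S : Type*} [CommRing S] (f : R →+* S) (P : ℕ → R) (n : ℕ) :
    f (ghostComponent ϖ q P n) = ghostComponent (f ϖ) q (fun i ↦ f (P i)) n := by
  simp only [ghostComponent, map_sum, map_mul, map_pow]

theorem map_ghostComponent_sub (φ : R →+* R) (hφϖ : φ ϖ = ϖ) (P : ℕ → R) (n : ℕ) :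
    φ (ghostComponent ϖ q P n) - ghostComponent ϖ q (fun i ↦ P i ^ q) n =
      ∑ i ∈ range (n + 1), ϖ ^ i * (φ (P i) ^ q ^ (n - i) - (P i ^ q) ^ q ^ (n - i)) := by
  simp only [ghostComponent, map_sum, map_mul, map_pow, hφϖ, ← sum_sub_distrib, mul_sub]

theorem pow_succ_dvd_map_ghostComponent_sub (hq : ϖ ∣ (q : R)) (φ : R →+* R)
    (hφϖ : φ ϖ = ϖ) (hφ : ∀ x, ϖ ∣ φ x - x ^ q) (P : ℕ → R) (n : ℕ) :
    ϖ ^ (n + 1) ∣ φ (ghostComponent ϖ q P n) - ghostComponent ϖ q (fun i ↦ P i ^ q) n := by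
  rw [map_ghostComponent_sub ϖ q φ hφϖ]
  refine dvd_sum fun i hi ↦ ?_
  have hin : i + (n - i + 1) = n + 1 := by have := mem_range.mp hi; omega
  rw [← hin, pow_add]
  exact mul_dvd_mul_left _ (dvd_pow_sub_pow_of_dvd_sub hq (hφ (P i)) _)

/-- Where the division by `ϖ ^ (n + 1)` is not exact, `Classical.epsilon` returns junk. -/
noncomputable def wittComponents (w : ℕ → R) : ℕ → R
  | 0 => w 0
  | n + 1 => Classical.epsilon fun y ↦
      ∑ i : Fin (n + 1), ϖ ^ (i : ℕ) * (wittComponents w i ^ q) ^ q ^ (n - i) +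
        ϖ ^ (n + 1) * y = w (n + 1)
decreasing_by exact i.isLt

theorem ghostComponent_wittComponents_succ (w : ℕ → R) (n : ℕ)
    (h : ϖ ^ (n + 1) ∣ w (n + 1) - ghostComponent ϖ q (fun i ↦ wittComponents ϖ q w i ^ q) n) :
    ghostComponent ϖ q (wittComponents ϖ q w) (n + 1) = w (n + 1) := by
  obtain ⟨y, hy⟩ := h
  have hsum : ghostComponent ϖ q (fun i ↦ wittComponents ϖ q w i ^ q) n =
      ∑ i : Fin (n + 1), ϖ ^ (i : ℕ) * (wittComponents ϖ q w i ^ q) ^ q ^ (n - i) :=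
    (Fin.sum_univ_eq_sum_range (fun i ↦ ϖ ^ i * (wittComponents ϖ q w i ^ q) ^ q ^ (n - i))
      (n + 1)).symm
  rw [ghostComponent_succ, wittComponents.eq_2, ← hsum]
  exact Classical.epsilon_spec (p := fun z ↦ _ + ϖ ^ (n + 1) * z = w (n + 1))
    ⟨y, by linear_combination -hy⟩

theorem ghostComponent_wittComponents_iterate (hq : ϖ ∣ (q : R)) (φ : R →+* R)
    (hφϖ : φ ϖ = ϖ) (hφ : ∀ x, ϖ ∣ φ x - x ^ q) (x : R) (n : ℕ) :
    ghostComponent ϖ q (wittComponents ϖ q fun k ↦ φ^[k] x) n = φ^[n] x := by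
  induction n with
  | zero => simp [ghostComponent, wittComponents]
  | succ n ih =>
    apply ghostComponent_wittComponents_succ
    rw [Function.iterate_succ_apply', ← ih]
    exact pow_succ_dvd_map_ghostComponent_sub ϖ q hq φ hφϖ hφ _ n

theorem pow_succ_mul_eq_of_ghostComponent_succ (φ : R →+* R) (hφϖ : φ ϖ = ϖ) (δ : R → R)
    (hφδ : ∀ x, φ x = x ^ q + ϖ * δ x) (P : ℕ → R) (m : ℕ)
    (h : ghostComponent ϖ q P (m + 1) = φ (ghostComponent ϖ q P m)) :
    ϖ ^ (m + 1) * P (m + 1) = ϖ ^ (m + 1) * δ (P m) +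
      ∑ i ∈ range m, ∑ j ∈ Icc 1 (q ^ (m - i)),
        ϖ ^ (i + j) * ((q ^ (m - i)).choose j : R) * P i ^ (q * (q ^ (m - i) - j)) *
          δ (P i) ^ j := by
  calc ϖ ^ (m + 1) * P (m + 1)
      = φ (ghostComponent ϖ q P m) - ghostComponent ϖ q (fun i ↦ P i ^ q) m := by
        rw [← h, ghostComponent_succ]; ring
    _ = ∑ i ∈ range (m + 1), ϖ ^ i * ∑ j ∈ Icc 1 (q ^ (m - i)),
          ((q ^ (m - i)).choose j : R) * (P i ^ q) ^ (q ^ (m - i) - j) * (ϖ * δ (P i)) ^ j := by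
        rw [map_ghostComponent_sub ϖ q φ hφϖ]
        simp only [hφδ, add_pow_sub_pow_eq_sum_Icc]
    _ = _ := by
        rw [sum_range_succ, add_comm]
        simp only [Nat.sub_self, pow_zero, Icc_self, sum_singleton, Nat.choose_self,
          Nat.cast_one, one_mul, pow_one, mul_sum]
        congr 1
        · ring
        · refine sum_congr rfl fun i _ ↦ sum_congr rfl fun j _ ↦ ?_
          ring

end Ghost

section FrobeniusLift

variable {O : Type*} [CommRing O] (π : O) (q : ℕ)

noncomputable def frobeniusPoly : MvPolynomial ℕ O →ₐ[O] MvPolynomial ℕ O :=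
  aeval fun i ↦ X i ^ q + C π * X (i + 1)

variable {B : Type*} [CommRing B] [Algebra O B] (δ : B → B) (Cb : B → B → B)
  (hCb : ∀ x y, algebraMap O B π * Cb x y = x ^ q + y ^ q - (x + y) ^ q)
  (hadd : ∀ x y, δ (x + y) = δ x + δ y + Cb x y)
  (hmul : ∀ x y, δ (x * y) = x ^ q * δ y + y ^ q * δ x + algebraMap O B π * (δ x * δ y))
  (hC : ∀ a : O, algebraMap O B π * δ (algebraMap O B a) = algebraMap O B a - algebraMap O B a ^ q)

def frobeniusLift : B →ₐ[O] B where
  toFun x := x ^ q + algebraMap O B π * δ x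
  map_one' := by
    have h1 := hC 1
    rw [map_one, one_pow, sub_self] at h1
    rw [one_pow, h1, add_zero]
  map_mul' x y := by rw [hmul]; ring
  map_zero' := by
    have h0 := hadd 0 0
    rw [add_zero] at h0
    linear_combination (-algebraMap O B π) * h0 - hCb 0 0
  map_add' x y := by rw [hadd]; linear_combination hCb x y
  commutes' a := by linear_combination hC a

theorem aeval_comp_frobeniusPoly (b : B) :
    (aeval fun k ↦ δ^[k] b).comp (frobeniusPoly π q) =
      (frobeniusLift π q δ Cb hCb hadd hmul hC).comp (aeval fun k ↦ δ^[k] b) := by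
  refine algHom_ext fun i ↦ ?_
  simp [frobeniusPoly, frobeniusLift, Function.iterate_succ_apply']

theorem aeval_iterate_frobeniusPoly (b : B) (n : ℕ) (Q : MvPolynomial ℕ O) :
    aeval (fun k ↦ δ^[k] b) ((frobeniusPoly π q)^[n] Q) =
      (frobeniusLift π q δ Cb hCb hadd hmul hC)^[n] (aeval (fun k ↦ δ^[k] b) Q) :=
  Function.Semiconj.iterate_right (fun Q ↦ AlgHom.congr_fun
    (aeval_comp_frobeniusPoly π q δ Cb hCb hadd hmul hC b) Q) n Q

end FrobeniusLift

theorem exp_delta_witt_components_general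
    {O : Type*} [CommRing O] [IsDomain O]
    (π : O) (hπ : Irreducible π) (p h e q : ℕ) (hp : p.Prime) (hh : 1 ≤ h)
    (he : 1 ≤ e) (hq : q = p ^ h) (hpe : Associated ((p : O)) (π ^ e))
    (δA : MvPolynomial ℕ O → MvPolynomial ℕ O)
    (hδA : ∀ Q, MvPolynomial.C π * δA Q =
      aeval (fun i : ℕ => X i ^ q + MvPolynomial.C π * X (i + 1)) Q - Q ^ q) :
    ∃ P : ℕ → MvPolynomial ℕ O,
      P 0 = X 0 ∧ P 1 = X 1 ∧
      (∀ n i j : ℕ, 2 ≤ n → i ≤ n - 2 → 1 ≤ j → j ≤ q ^ (n - 1 - i) →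
        π ^ (n - i - j) ∣ (((q ^ (n - 1 - i)).choose j : ℕ) : O)) ∧
      (∀ (n : ℕ) (hn : 2 ≤ n),
        (MvPolynomial.C π : MvPolynomial ℕ O) ^ n * P n =
          (MvPolynomial.C π : MvPolynomial ℕ O) ^ n * δA (P (n - 1)) +
          ∑ i ∈ Finset.range (n - 1), ∑ j ∈ Finset.Icc 1 (q ^ (n - 1 - i)),
            (MvPolynomial.C π : MvPolynomial ℕ O) ^ (i + j) *
              MvPolynomial.C (((q ^ (n - 1 - i)).choose j : ℕ) : O) *
              (P i) ^ (q * (q ^ (n - 1 - i) - j)) * (δA (P i)) ^ j) ∧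
      (∀ (B : Type) [CommRing B] [Algebra O B] (δ : B → B) (Cb : B → B → B),
        (∀ x y, algebraMap O B π * Cb x y = x ^ q + y ^ q - (x + y) ^ q) →
        (∀ x y, δ (x + y) = δ x + δ y + Cb x y) →
        (∀ x y, δ (x * y) = x ^ q * δ y + y ^ q * δ x +
          algebraMap O B π * (δ x * δ y)) →
        (∀ a : O, algebraMap O B π * δ (algebraMap O B a) =
          algebraMap O B a - (algebraMap O B a) ^ q) →
        ∀ (b : B) (n : ℕ),
          ∑ i ∈ Finset.range (n + 1),
            algebraMap O B π ^ i *
              (aeval (fun k : ℕ => δ^[k] b) (P i)) ^ (q ^ (n - i)) =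
          (fun x => x ^ q + algebraMap O B π * δ x)^[n] b) := by
  have hπp : π ∣ (p : O) := (dvd_pow_self π (by omega)).trans hpe.symm.dvd
  have hπq : (C π : MvPolynomial ℕ O) ∣ (q : MvPolynomial ℕ O) := by
    rw [← map_natCast C, hq, Nat.cast_pow]
    exact map_dvd C (hπp.trans (dvd_pow_self _ (by omega)))
  set φ := (frobeniusPoly π q : MvPolynomial ℕ O →+* MvPolynomial ℕ O)
  have hφC : φ (C π) = C π := (frobeniusPoly π q).commutes π
  have hφ : ∀ Q, φ Q = Q ^ q + C π * δA Q := fun Q ↦ by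
    rw [hδA]; simp [φ, frobeniusPoly]
  set P := wittComponents (C π) q fun n ↦ φ^[n] (X 0)
  have ghost : ∀ n, ghostComponent (C π) q P n = φ^[n] (X 0) :=
    ghostComponent_wittComponents_iterate (C π) q hπq φ hφC
      (fun Q ↦ ⟨δA Q, by rw [hφ]; ring⟩) (X 0)
  have hP0 : P 0 = X 0 := by simpa [ghostComponent] using ghost 0
  refine ⟨P, hP0, ?_, ?_, ?_, ?_⟩
  · have h1 := ghost 1
    rw [ghostComponent_succ] at h1
    simp [ghostComponent, hP0, φ, frobeniusPoly] at h1
    exact h1.resolve_right hπ.ne_zero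
  · intro n i j hn hi hj _
    have hle : n - i - j ≤ h * (n - 1 - i) + 1 - j := by
      have := Nat.le_mul_of_pos_left (n - 1 - i) (by omega : 0 < h)
      omega
    rw [hq, ← pow_mul]
    exact (pow_dvd_pow π hle).trans <| (pow_dvd_pow_of_dvd hπp _).trans <| by
      exact_mod_cast Nat.cast_dvd_cast (hp.pow_add_one_sub_dvd_choose_pow (by omega))
  · intro n hn
    obtain ⟨m, rfl⟩ : ∃ m, n = m + 1 := ⟨n - 1, by omega⟩
    have := pow_succ_mul_eq_of_ghostComponent_succ (C π) q φ hφC δA hφ P m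
      (by rw [ghost, ghost, Function.iterate_succ_apply'])
    simpa only [Nat.add_sub_cancel, map_natCast] using this
  · intro B _ _ δ Cb hCb hadd hmul hC b n
    have := congrArg (aeval fun k ↦ δ^[k] b) (ghost n)
    rw [AlgHom.coe_toRingHom, aeval_iterate_frobeniusPoly π q δ Cb hCb hadd hmul hC,
      ← AlgHom.coe_toRingHom, map_ghostComponent] at this
    simp only [AlgHom.coe_toRingHom, aeval_C, aeval_X, Function.iterate_zero_apply] at this
    exact this

/-- There exist polynomials `P_n ∈ O[T, T', …, T⁽ⁿ⁾]` with `P₀ = T`, `P₁ = T'`,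
satisfying the recursion
`P_n = P_{n-1}^δ + Σ_{i=0}^{n-2} Σ_{j=1}^{q^{n-1-i}} π^{i+j-n}·C(q^{n-1-i},j)·P_i^{q(q^{n-1-i}-j)}·(P_i^δ)^j`
(stated multiplied through by `π^n`, together with the integrality
`π^{n-i-j} ∣ C(q^{n-1-i},j)` in `O` of the coefficients), such that for any
`O`-algebra with `π`-derivation `(B, δ)` and any `b ∈ B`, the canonical section
`exp_δ : B → W_{π,q}(B)` has Witt components `(P₀(b), P₁(b), P₂(b), …)`;
equivalently (via the ghost map), for all `n`:
`Σ_{i=0}^{n} π^i·P_i(b)^{q^{n-i}} = φⁿ(b)` where `φ(b) = b^q + πδ(b)` and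
`P_i(b) := P_i(b, δb, …, δⁱb)`. -/
theorem exp_delta_witt_components
    {O : Type*} [CommRing O] [IsDomain O] [IsDiscreteValuationRing O]
    (π : O) (hπ : Irreducible π) (p h e q : ℕ) (hp : p.Prime) (hh : 1 ≤ h)
    (he : 1 ≤ e) (hq : q = p ^ h) (hpe : Associated ((p : O)) (π ^ e))
    (δA : MvPolynomial ℕ O → MvPolynomial ℕ O)
    (hδA : ∀ Q, MvPolynomial.C π * δA Q =
      aeval (fun i : ℕ => X i ^ q + MvPolynomial.C π * X (i + 1)) Q - Q ^ q) :
    ∃ P : ℕ → MvPolynomial ℕ O,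
      P 0 = X 0 ∧ P 1 = X 1 ∧
      (∀ n i j : ℕ, 2 ≤ n → i ≤ n - 2 → 1 ≤ j → j ≤ q ^ (n - 1 - i) →
        π ^ (n - i - j) ∣ (((q ^ (n - 1 - i)).choose j : ℕ) : O)) ∧
      (∀ (n : ℕ) (hn : 2 ≤ n),
        (MvPolynomial.C π : MvPolynomial ℕ O) ^ n * P n =
          (MvPolynomial.C π : MvPolynomial ℕ O) ^ n * δA (P (n - 1)) +
          ∑ i ∈ Finset.range (n - 1), ∑ j ∈ Finset.Icc 1 (q ^ (n - 1 - i)),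
            (MvPolynomial.C π : MvPolynomial ℕ O) ^ (i + j) *
              MvPolynomial.C (((q ^ (n - 1 - i)).choose j : ℕ) : O) *
              (P i) ^ (q * (q ^ (n - 1 - i) - j)) * (δA (P i)) ^ j) ∧
      (∀ (B : Type) [CommRing B] [Algebra O B] (δ : B → B) (Cb : B → B → B),
        (∀ x y, algebraMap O B π * Cb x y = x ^ q + y ^ q - (x + y) ^ q) →
        (∀ x y, δ (x + y) = δ x + δ y + Cb x y) →
        (∀ x y, δ (x * y) = x ^ q * δ y + y ^ q * δ x +
          algebraMap O B π * (δ x * δ y)) →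
        (∀ a : O, algebraMap O B π * δ (algebraMap O B a) =
          algebraMap O B a - (algebraMap O B a) ^ q) →
        ∀ (b : B) (n : ℕ),
          ∑ i ∈ Finset.range (n + 1),
            algebraMap O B π ^ i *
              (aeval (fun k : ℕ => δ^[k] b) (P i)) ^ (q ^ (n - i)) =
          (fun x => x ^ q + algebraMap O B π * δ x)^[n] b) :=
  exp_delta_witt_components_general π hπ p h e q hp hh he hq hpe δA hδA
end

section
/- Let A be a commutative ring with a p-derivation δ and associated Frobenius lift φ(a) = a^p + p·δ(a). Then the ghost components of the sequence (P₀(a), P₁(a), …, P_n(a)) equal (a, φ(a), …, φⁿ(a)): that is, Σ_{i=0}^{n} p^i · P_i(a)^{p^{n-i}} = φⁿ(a) for all n ≥ 0 and a ∈ A, where P_i(a) are defined by P₀(a) = a, P₁(a) = δ(a), and the recursion pⁿ·P_n(a) = pⁿ·δ(P_{n-1}(a)) + Σ_{i=0}^{n-2} Σ_{j=1}^{p^{n-1-i}} p^{i+j}·C(p^{n-1-i},j)·P_i(a)^{p(p^{n-1-i}-j)}·δ(P_i(a))^j. -/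
/-!
Since `φ` is additive and multiplicative, applying it to the `n`-th ghost component gives
`Σ_{i ≤ n} p^i (P_i^p + p δ(P_i))^{p^{n-i}}`. In the binomial expansion of each summand the
`j = 0` terms are the first `n + 1` summands of the `(n+1)`-st ghost component, and the `j ≥ 1`
terms are `p^{n+1} δ(P_n)` plus the double sum of the recursion, which together make up the
missing summand `p^{n+1} P_{n+1}`.
-/

open Finset

theorem map_pow_of_ne_zero {M N F : Type*} [Monoid M] [Monoid N] [FunLike F M N]
    [MulHomClass F M N] (f : F) (x : M) {k : ℕ} (hk : k ≠ 0) : f (x ^ k) = f x ^ k := by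
  obtain ⟨k, rfl⟩ := Nat.exists_eq_succ_of_ne_zero hk
  clear hk
  induction k with
  | zero => simp
  | succ k ih => rw [pow_succ x (k + 1), map_mul, ih, ← pow_succ]

theorem add_pow_eq_pow_add_sum_Icc {R : Type*} [CommSemiring R] (x y : R) (m : ℕ) :
    (x + y) ^ m = x ^ m + ∑ j ∈ Icc 1 m, x ^ (m - j) * y ^ j * m.choose j := by
  rw [add_comm, add_pow, range_eq_Ico, sum_eq_sum_Ico_succ_bot m.succ_pos, zero_add,
    Nat.succ_eq_add_one, Ico_add_one_right_eq_Icc]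
  simp only [pow_zero, one_mul, Nat.sub_zero, Nat.choose_zero_right, Nat.cast_one, mul_one]
  exact congrArg _ (sum_congr rfl fun j _ => by ring)

theorem pow_mul_add_natCast_mul_pow {R : Type*} [CommSemiring R] (p i m : ℕ) (x y : R) :
    (p : R) ^ i * (x ^ p + p * y) ^ m = (p : R) ^ i * x ^ (p * m) +
      ∑ j ∈ Icc 1 m, (p : R) ^ (i + j) * (m.choose j : R) * x ^ (p * (m - j)) * y ^ j := by
  rw [add_pow_eq_pow_add_sum_Icc, mul_add, mul_sum, ← pow_mul]
  exact congrArg _ (sum_congr rfl fun j _ => by rw [mul_pow, ← pow_mul, pow_add]; ring)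

namespace PDerivation

variable {A : Type*} [CommRing A] {p : ℕ} {δ : A → A}

/-- Only non-unital in general: `δ x = -x ^ p / p` on `ℚ` is a `p`-derivation with `φ = 0`. -/
def frobeniusLift (C : A → A → A)
    (hC : ∀ x y, (p : A) * C x y = x ^ p + y ^ p - (x + y) ^ p)
    (hadd : ∀ x y, δ (x + y) = δ x + δ y + C x y)
    (hmul : ∀ x y, δ (x * y) = x ^ p * δ y + y ^ p * δ x + (p : A) * (δ x * δ y)) :
    A →ₙ+* A :=
  { AddMonoidHom.mk' (fun x => x ^ p + (p : A) * δ x) fun x y => by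
      linear_combination (p : A) * hadd x y + hC x y with
    map_mul' := fun x y => show (x * y) ^ p + (p : A) * δ (x * y) =
        (x ^ p + (p : A) * δ x) * (y ^ p + (p : A) * δ y) by
      linear_combination (p : A) * hmul x y }

theorem map_ghost_sum (φ : A →ₙ+* A) (hφ : ∀ x, φ x = x ^ p + p * δ x) (hp : p ≠ 0)
    (P : ℕ → A) (n : ℕ) :
    φ (∑ i ∈ range (n + 1), (p : A) ^ i * P i ^ p ^ (n - i)) =
      ∑ i ∈ range (n + 1), (p : A) ^ i * P i ^ p ^ (n + 1 - i) + ((p : A) ^ (n + 1) * δ (P n) +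
        ∑ i ∈ range n, ∑ j ∈ Icc 1 (p ^ (n - i)),
          (p : A) ^ (i + j) * (((p ^ (n - i)).choose j : ℕ) : A) *
            P i ^ (p * (p ^ (n - i) - j)) * δ (P i) ^ j) := by
  have hterm : ∀ i ∈ range (n + 1), φ ((p : A) ^ i * P i ^ p ^ (n - i)) =
      (p : A) ^ i * P i ^ p ^ (n + 1 - i) + ∑ j ∈ Icc 1 (p ^ (n - i)),
        (p : A) ^ (i + j) * (((p ^ (n - i)).choose j : ℕ) : A) *
          P i ^ (p * (p ^ (n - i) - j)) * δ (P i) ^ j := by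
    intro i hi
    have hexp : p * p ^ (n - i) = p ^ (n + 1 - i) := by
      rw [← pow_succ', Nat.sub_add_comm (Nat.lt_succ_iff.mp (mem_range.mp hi))]
    rw [← Nat.cast_pow, ← nsmul_eq_mul, map_nsmul, nsmul_eq_mul, Nat.cast_pow,
      map_pow_of_ne_zero _ _ (pow_ne_zero _ hp), hφ, pow_mul_add_natCast_mul_pow, hexp]
  rw [map_sum, sum_congr rfl hterm, sum_add_distrib]
  congr 1
  rw [sum_range_succ, add_comm]
  congr 1
  simp

end PDerivation

theorem ghost_components_of_P_general (p : ℕ) (hp : p.Prime)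
    {A : Type*} [CommRing A]
    (δ : A → A) (C : A → A → A)
    (hC : ∀ x y, (p : A) * C x y = x ^ p + y ^ p - (x + y) ^ p)
    (hadd : ∀ x y, δ (x + y) = δ x + δ y + C x y)
    (hmul : ∀ x y, δ (x * y) = x ^ p * δ y + y ^ p * δ x + (p : A) * (δ x * δ y))
    (a : A) (P : ℕ → A) (hP0 : P 0 = a) (hP1 : P 1 = δ a)
    (hrec : ∀ n : ℕ, 2 ≤ n →
      (p : A) ^ n * P n = (p : A) ^ n * δ (P (n - 1)) +
        ∑ i ∈ Finset.range (n - 1), ∑ j ∈ Finset.Icc 1 (p ^ (n - 1 - i)),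
          (p : A) ^ (i + j) * (((p ^ (n - 1 - i)).choose j : ℕ) : A) *
            (P i) ^ (p * (p ^ (n - 1 - i) - j)) * (δ (P i)) ^ j) :
    ∀ n : ℕ,
      ∑ i ∈ Finset.range (n + 1), (p : A) ^ i * (P i) ^ (p ^ (n - i)) =
        (fun x => x ^ p + (p : A) * δ x)^[n] a := by
  have hrec_succ : ∀ n : ℕ, (p : A) ^ (n + 1) * P (n + 1) = (p : A) ^ (n + 1) * δ (P n) +
      ∑ i ∈ range n, ∑ j ∈ Icc 1 (p ^ (n - i)),
        (p : A) ^ (i + j) * (((p ^ (n - i)).choose j : ℕ) : A) *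
          P i ^ (p * (p ^ (n - i) - j)) * δ (P i) ^ j := by
    rintro (_ | n)
    · simp [hP0, hP1]
    · simpa using hrec (n + 2) (by omega)
  rw [show (fun x => x ^ p + (p : A) * δ x) = ⇑(PDerivation.frobeniusLift C hC hadd hmul)
    from rfl]
  intro n
  induction n with
  | zero => simp [hP0]
  | succ n ih =>
    rw [Function.iterate_succ_apply', ← ih,
      PDerivation.map_ghost_sum _ (fun _ => rfl) hp.ne_zero, sum_range_succ _ (n + 1),
      Nat.sub_self, pow_zero, pow_one]
    linear_combination hrec_succ n

/-- Let `A` be a `p`-torsion-free commutative ring with a `p`-derivation `δ`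
and Frobenius lift `φ(a) = a^p + p·δ(a)`.  Then the ghost components of
`(P₀(a), …, P_n(a))` equal `(a, φ(a), …, φⁿ(a))`:
`Σ_{i=0}^{n} p^i·P_i(a)^{p^{n-i}} = φⁿ(a)`, where `P₀(a) = a`, `P₁(a) = δ(a)`
and `pⁿ·P_n(a) = pⁿ·δ(P_{n-1}(a)) + Σ_{i=0}^{n-2} Σ_{j=1}^{p^{n-1-i}}
p^{i+j}·C(p^{n-1-i},j)·P_i(a)^{p(p^{n-1-i}-j)}·δ(P_i(a))^j`. -/
theorem ghost_components_of_P (p : ℕ) (hp : p.Prime)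
    {A : Type*} [CommRing A]
    (htf : ∀ a : A, (p : A) * a = 0 → a = 0)
    (δ : A → A) (C : A → A → A)
    (hC : ∀ x y, (p : A) * C x y = x ^ p + y ^ p - (x + y) ^ p)
    (hadd : ∀ x y, δ (x + y) = δ x + δ y + C x y)
    (hmul : ∀ x y, δ (x * y) = x ^ p * δ y + y ^ p * δ x + (p : A) * (δ x * δ y))
    (a : A) (P : ℕ → A) (hP0 : P 0 = a) (hP1 : P 1 = δ a)
    (hrec : ∀ n : ℕ, 2 ≤ n →
      (p : A) ^ n * P n = (p : A) ^ n * δ (P (n - 1)) +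
        ∑ i ∈ Finset.range (n - 1), ∑ j ∈ Finset.Icc 1 (p ^ (n - 1 - i)),
          (p : A) ^ (i + j) * (((p ^ (n - 1 - i)).choose j : ℕ) : A) *
            (P i) ^ (p * (p ^ (n - 1 - i) - j)) * (δ (P i)) ^ j) :
    ∀ n : ℕ,
      ∑ i ∈ Finset.range (n + 1), (p : A) ^ i * (P i) ^ (p ^ (n - i)) =
        (fun x => x ^ p + (p : A) * δ x)^[n] a :=
  ghost_components_of_P_general p hp δ C hC hadd hmul a P hP0 hP1 hrec
end
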